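/- Let A be a finite abelian group of exponent e and order n, and let f : ℤ → A satisfy: the composition of f with the quotient map A → A/A' is n'-periodic (for a subgroup A' of order dividing n with quotient of order n'), and on each fiber f restricted to the arithmetic progression m + n'ℤ is a polynomial map of degree ≤ k into A'. Then f is n'·|A'|^k-periodic. -/
import Mathlib


/-- Additive difference operator `Δ_t f (x) = f (x+t) - f x`. -/
def addDeriv {H A : Type*} [AddCommGroup H] [AddCommGroup A] (f : H → A) (t : H) : H → A :=
  fun x => f (x + t) - f x

/-- `f : H → A` is a polynomial map of degree at most `k`: all `(k+1)`-fold
difference operators annihilate it. -/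
def IsPolyMap {H A : Type*} [AddCommGroup H] [AddCommGroup A] (k : ℕ) (f : H → A) : Prop :=
  ∀ t : Fin (k + 1) → H, ∀ x, ((List.ofFn t).foldl addDeriv f) x = 0

lemma isPolyMap_addDeriv {H A : Type*} [AddCommGroup H] [AddCommGroup A] {k : ℕ}
    {g : H → A} (hg : IsPolyMap (k + 1) g) (t : H) : IsPolyMap k (addDeriv g t) := by
  intro s x
  have := hg (Fin.cons t s) x
  simpa [List.ofFn_succ] using this

lemma poly_periodic {A : Type*} [AddCommGroup A] [Fintype A] (A' : AddSubgroup A) :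
    ∀ k : ℕ, ∀ g : ℤ → A, (∀ j, g j ∈ A') → IsPolyMap k g →
      ∀ x, g (x + (Nat.card A' : ℤ) ^ k) = g x := by
  intro k
  induction k with
  | zero =>
    intro g _ hg x
    have := hg (fun _ => (1 : ℤ)) x
    simp only [List.ofFn_succ, List.ofFn_zero, List.foldl_cons, List.foldl_nil, addDeriv] at this
    have := sub_eq_zero.mp this
    simpa using this
  | succ k ih =>
    intro g hmem hg x
    set d : ℤ := (Nat.card A' : ℤ) ^ k with hd
    have hder : IsPolyMap k (addDeriv g d) := isPolyMap_addDeriv hg d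
    have hdermem : ∀ j, addDeriv g d j ∈ A' := fun j => A'.sub_mem (hmem _) (hmem _)
    have hper : ∀ y, addDeriv g d (y + d) = addDeriv g d y := ih _ hdermem hder
    have hper' : ∀ (i : ℕ) (y : ℤ), addDeriv g d (y + i * d) = addDeriv g d y := by
      intro i
      induction i with
      | zero => simp
      | succ i ih2 =>
        intro y
        have : y + (↑(i + 1)) * d = (y + i * d) + d := by push_cast; ring
        rw [this, hper, ih2]
    have key : ∀ i : ℕ, g (x + i * d) = g x + i • addDeriv g d x := by
      intro i
      induction i with
      | zero => simp
      | succ i ih2 =>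
        have h1 : x + (↑(i + 1)) * d = (x + i * d) + d := by push_cast; ring
        have h2 : g ((x + i * d) + d) = g (x + i * d) + addDeriv g d (x + i * d) := by
          simp [addDeriv]
        rw [h1, h2, hper' i x, ih2, succ_nsmul]
        abel
    have hN : (Nat.card A' : ℤ) ^ (k + 1) = (Nat.card A' : ℕ) * d := by
      push_cast; ring
    rw [hN, key]
    have : (Nat.card A') • addDeriv g d x = 0 := by
      have hm := hdermem x
      haveI : Fintype A' := Fintype.ofFinite _
      have h0 : (Nat.card A') • (⟨addDeriv g d x, hm⟩ : A') = 0 := by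
        rw [Nat.card_eq_fintype_card]
        exact card_nsmul_eq_zero
      have h1 := congrArg (Subtype.val) h0
      simpa only [AddSubmonoidClass.coe_nsmul, ZeroMemClass.coe_zero] using h1
    rw [this, add_zero]

/-- Inductive periodicity step: if the projection of `f` modulo `A'` is
`n'`-periodic and the fiberwise corrections are degree-`k` polynomial maps into
`A'`, then `f` is `n'·|A'|^k`-periodic. -/
theorem stmt_16 {A : Type*} [AddCommGroup A] [Fintype A] (A' : AddSubgroup A)
    (n' : ℕ) (hn' : Nat.card (A ⧸ A') = n') (k : ℕ) (f : ℤ → A)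
    (hper : ∀ m : ℤ, (QuotientAddGroup.mk (f (m + (n' : ℤ))) : A ⧸ A') = QuotientAddGroup.mk (f m))
    (hfib : ∀ m : ℤ, (∀ j : ℤ, f (m + (n' : ℤ) * j) - f m ∈ A') ∧
      IsPolyMap k (fun j : ℤ => f (m + (n' : ℤ) * j) - f m)) :
    ∀ m : ℤ, f (m + (n' : ℤ) * (Nat.card A' : ℤ) ^ k) = f m := by
  intro m
  obtain ⟨hmem, hpoly⟩ := hfib m
  have := poly_periodic A' k (fun j : ℤ => f (m + (n' : ℤ) * j) - f m) hmem hpoly 0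
  have := this
  simp only [mul_zero, add_zero, sub_self] at this
  exact sub_eq_zero.mp (by simpa using this)
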